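/- For all integers b ≥ 2 and m ≥ 2, lim_{N→∞} (1/N) Σ_{n=0}^{N−1} exp(2πi s_b(n)/m) = 0, where s_b(n) is the base-b digit sum of n. -/

import Mathlib

/-!
Write `S N = ∑_{n<N} ω ^ s_b(n)` with `ω = exp(2πi/m)` and `c = ∑_{d<b} ω ^ d`. Splitting `n = b q + d`
gives `S (b q + r) = c S q + ω ^ s_b(q) ∑_{d<r} ω ^ d`, so `‖S N‖ ≤ M ‖S (N / b)‖ + b` with
`M = max 1 ‖c‖`. Unrolling this `log_b N` times gives `‖S N‖ ≤ b (log_b N + 1) M ^ log_b N`, and since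
`ω ≠ 1` lies on the unit circle the strict triangle inequality gives `M < b`, so
`‖S N‖ / N ≤ b (L + 1) (M / b) ^ L → 0` with `L = log_b N`.
-/

open Filter Finset Topology

theorem Nat.digits_sum_add_base_mul {b : ℕ} (hb : 1 < b) {d : ℕ} (hd : d < b) (q : ℕ) :
    (Nat.digits b (d + b * q)).sum = d + (Nat.digits b q).sum := by
  by_cases h : d = 0 ∧ q = 0
  · simp [h.1, h.2]
  · rw [Nat.digits_add b hb d q hd (by tauto), List.sum_cons]

section DigitSumPowSum

variable {R : Type*} [CommSemiring R]

def digitSumPowSum (b : ℕ) (ω : R) (N : ℕ) : R :=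
  ∑ n ∈ range N, ω ^ (Nat.digits b n).sum

variable {b : ℕ}

theorem digitSumPowSum_zero (ω : R) : digitSumPowSum b ω 0 = 0 :=
  sum_range_zero _

theorem digitSumPowSum_base_mul_add (hb : 1 < b) (ω : R) (q : ℕ) {r : ℕ} (hr : r ≤ b) :
    digitSumPowSum b ω (b * q + r) =
      digitSumPowSum b ω (b * q) + ω ^ (Nat.digits b q).sum * ∑ d ∈ range r, ω ^ d := by
  rw [digitSumPowSum, digitSumPowSum, sum_range_add, mul_sum]
  congr 1
  refine sum_congr rfl fun d hd => ?_
  rw [add_comm (b * q), Nat.digits_sum_add_base_mul hb ((mem_range.1 hd).trans_le hr), pow_add,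
    mul_comm]

theorem digitSumPowSum_base_mul (hb : 1 < b) (ω : R) (q : ℕ) :
    digitSumPowSum b ω (b * q) = (∑ d ∈ range b, ω ^ d) * digitSumPowSum b ω q := by
  induction q with
  | zero => simp [digitSumPowSum_zero]
  | succ q ih =>
    rw [mul_add_one, digitSumPowSum_base_mul_add hb ω q le_rfl, ih, digitSumPowSum,
      digitSumPowSum, sum_range_succ]
    ring

theorem digitSumPowSum_eq_div_add_mod (hb : 1 < b) (ω : R) (N : ℕ) :
    digitSumPowSum b ω N =
      (∑ d ∈ range b, ω ^ d) * digitSumPowSum b ω (N / b) +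
        ω ^ (Nat.digits b (N / b)).sum * ∑ d ∈ range (N % b), ω ^ d := by
  conv_lhs => rw [← Nat.div_add_mod N b]
  rw [digitSumPowSum_base_mul_add hb ω _ (Nat.mod_lt N (by omega)).le,
    digitSumPowSum_base_mul hb]

end DigitSumPowSum

theorem le_mul_log_mul_pow_log_of_le_mul_div_add {b : ℕ} (hb : 1 < b) {M B : ℝ} (hM : 1 ≤ M)
    (hB : 0 ≤ B) {a : ℕ → ℝ} (h0 : a 0 = 0) (ha : ∀ N, a N ≤ M * a (N / b) + B) (N : ℕ) :
    a N ≤ B * ((Nat.log b N + 1) * M ^ Nat.log b N) := by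
  induction N using Nat.strong_induction_on with
  | _ N ih =>
  rcases lt_or_ge N b with hNb | hNb
  · simpa [Nat.div_eq_of_lt hNb, Nat.log_of_lt hNb, h0] using ha N
  · have hlog : Nat.log b N = Nat.log b (N / b) + 1 := by
      rw [Nat.log_div_base]
      have := Nat.log_pos hb hNb
      omega
    have hq := ih (N / b) (Nat.div_lt_self (by omega) hb)
    set L := Nat.log b (N / b)
    have hML : 1 ≤ M ^ (L + 1) := one_le_pow₀ hM
    calc a N ≤ M * a (N / b) + B := ha N
      _ ≤ M * (B * ((L + 1) * M ^ L)) + B := by gcongr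
      _ = B * ((L + 1) * M ^ (L + 1)) + B * 1 := by ring
      _ ≤ B * ((L + 1) * M ^ (L + 1)) + B * M ^ (L + 1) := by gcongr
      _ = B * ((Nat.log b N + 1) * M ^ Nat.log b N) := by rw [hlog]; push_cast; ring

theorem Nat.tendsto_log_atTop {b : ℕ} (hb : 1 < b) : Tendsto (Nat.log b) atTop atTop :=
  tendsto_atTop_atTop_of_monotone (fun _ _ => Nat.log_mono_right)
    fun K => ⟨b ^ K, (Nat.log_pow hb K).ge⟩

theorem tendsto_log_mul_pow_log_div {b : ℕ} (hb : 1 < b) {M : ℝ} (hM₀ : 0 ≤ M) (hMb : M < b) :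
    Tendsto (fun N : ℕ => (Nat.log b N + 1) * M ^ Nat.log b N / N) atTop (𝓝 0) := by
  have hr₀ : 0 ≤ M / b := by positivity
  have hr₁ : M / b < 1 := (div_lt_one (by positivity)).2 hMb
  have hgeom : Tendsto (fun L : ℕ => (L + 1) * (M / b) ^ L) atTop (𝓝 0) := by
    simpa [add_mul] using (tendsto_self_mul_const_pow_of_lt_one hr₀ hr₁).add
      (tendsto_pow_atTop_nhds_zero_of_lt_one hr₀ hr₁)
  refine squeeze_zero' (Eventually.of_forall fun N => by positivity) ?_
    (hgeom.comp (Nat.tendsto_log_atTop hb))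
  filter_upwards [eventually_ne_atTop 0] with N hN
  have hpow : ((b ^ Nat.log b N : ℕ) : ℝ) ≤ N := by exact_mod_cast Nat.pow_log_le_self b hN
  push_cast at hpow
  calc (Nat.log b N + 1) * M ^ Nat.log b N / N
      ≤ (Nat.log b N + 1) * M ^ Nat.log b N / (b : ℝ) ^ Nat.log b N := by gcongr
    _ = (Nat.log b N + 1) * (M / b) ^ Nat.log b N := by rw [div_pow, mul_div_assoc]

section UnitDisc

variable {ω : ℂ}

theorem norm_one_add_lt_two (hω : ‖ω‖ ≤ 1) (hω₁ : ω ≠ 1) : ‖1 + ω‖ < 2 := by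
  rcases hω.lt_or_eq with hlt | heq
  · linarith [norm_add_le 1 ω, norm_one (α := ℂ)]
  · have hray : ¬SameRay ℝ 1 ω := fun h => hω₁ (h.eq_of_norm_eq (by simp [heq])).symm
    simpa [heq, one_add_one_eq_two] using norm_add_lt_of_not_sameRay hray

theorem norm_sum_pow_le_card (hω : ‖ω‖ ≤ 1) (s : Finset ℕ) (e : ℕ → ℕ) :
    ‖∑ i ∈ s, ω ^ e i‖ ≤ #s := by
  calc ‖∑ i ∈ s, ω ^ e i‖ ≤ ∑ _i ∈ s, (1 : ℝ) :=
        norm_sum_le_of_le s fun i _ => by rw [norm_pow]; exact pow_le_one₀ (norm_nonneg _) hω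
    _ = #s := by simp

theorem norm_sum_range_pow_lt {b : ℕ} (hb : 1 < b) (hω : ‖ω‖ ≤ 1) (hω₁ : ω ≠ 1) :
    ‖∑ d ∈ range b, ω ^ d‖ < b := by
  obtain ⟨k, rfl⟩ : ∃ k, b = k + 2 := ⟨b - 2, by omega⟩
  rw [sum_range_succ', sum_range_succ', add_assoc, pow_one, pow_zero, add_comm ω]
  calc ‖∑ d ∈ range k, ω ^ (d + 1 + 1) + (1 + ω)‖
      ≤ ‖∑ d ∈ range k, ω ^ (d + 1 + 1)‖ + ‖1 + ω‖ := norm_add_le _ _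
    _ < k + 2 := by
      have := norm_sum_pow_le_card hω (range k) (· + 1 + 1)
      rw [card_range] at this
      linarith [norm_one_add_lt_two hω hω₁]
    _ = ((k + 2 : ℕ) : ℝ) := by push_cast; ring

theorem tendsto_inv_mul_digitSumPowSum (b : ℕ) (hb : 1 < b) (hω : ‖ω‖ ≤ 1) (hω₁ : ω ≠ 1) :
    Tendsto (fun N : ℕ => (N : ℂ)⁻¹ * digitSumPowSum b ω N) atTop (𝓝 0) := by
  set c := ∑ d ∈ range b, ω ^ d
  set M := max 1 ‖c‖
  have hMb : M < b := max_lt (by exact_mod_cast hb) (norm_sum_range_pow_lt hb hω hω₁)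
  have hrec (N : ℕ) :
      ‖digitSumPowSum b ω N‖ ≤ M * ‖digitSumPowSum b ω (N / b)‖ + b := by
    rw [digitSumPowSum_eq_div_add_mod hb]
    refine (norm_add_le _ _).trans ?_
    rw [norm_mul, norm_mul, norm_pow]
    gcongr
    · exact le_max_right _ _
    · calc ‖ω‖ ^ _ * ‖∑ d ∈ range (N % b), ω ^ d‖ ≤ 1 * (N % b : ℕ) := by
            gcongr
            · exact pow_le_one₀ (norm_nonneg _) hω
            · simpa using norm_sum_pow_le_card hω (range (N % b)) id
        _ ≤ b := by rw [one_mul]; exact_mod_cast (Nat.mod_lt N (by omega)).le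
  have hbound := le_mul_log_mul_pow_log_of_le_mul_div_add hb (le_max_left 1 ‖c‖)
    (Nat.cast_nonneg b) (by simp [digitSumPowSum_zero]) hrec
  refine squeeze_zero_norm (fun N => ?_)
    (by simpa using (tendsto_log_mul_pow_log_div hb (by positivity) hMb).const_mul (b : ℝ))
  rw [norm_mul, norm_inv, Complex.norm_natCast, inv_mul_eq_div, mul_div_assoc']
  gcongr
  exact hbound N

end UnitDisc

open Filter in
theorem stmt11 (b m : ℕ) (hb : 2 ≤ b) (hm : 2 ≤ m) :
    Tendsto (fun N : ℕ => (1 / N : ℂ) * ∑ n ∈ Finset.range N,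
        Complex.exp (2 * Real.pi * Complex.I * ((Nat.digits b n).sum : ℂ) / m))
      atTop (nhds 0) := by
  have hζ := Complex.isPrimitiveRoot_exp m (by omega)
  convert tendsto_inv_mul_digitSumPowSum b hb (hζ.norm'_eq_one (by omega)).le (hζ.ne_one hm)
    using 3 with N
  · exact one_div _
  · refine sum_congr rfl fun n _ => ?_
    rw [← Complex.exp_nat_mul]
    ring_nf
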